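/- (Theorem 3.) Let R̂ be Hermitian positive definite and C̄ Hermitian positive semidefinite, and let (W, x, y₁, y₂) be an optimal solution of the primal problem (i.e., primal feasible with tr(R̂ W) ≤ tr(R̂ W') for every primal-feasible tuple (W', x', y₁', y₂')) and (Z, z₁, z₂) an optimal solution of the dual problem (i.e., dual feasible with z₁ ≥ z₁' for every dual-feasible tuple (Z', z₁', z₂')). Suppose the optimal values agree and are positive: tr(R̂ W) = z₁ > 0 (so W ≠ 0). If tr(R̂^{-1} Z) ≤ 1, then rank(W) = 1. -/

import Mathlib

/-!
Pairing the primal constraints with the dual variables (weak duality) gives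
`tr (R̂ W) ≥ z₁ + tr ((R̂ - Z) W)`. The slack is the trace of a product of two positive
semidefinite matrices, hence nonnegative, and vanishes only when the product does; so zero duality
gap gives `(R̂ - Z) W = 0` and `rank W ≤ N - rank (R̂ - Z)`. Writing `R̂ = Sᴴ S`, the matrix `R̂ - Z` is congruent to `1 - M` with
`M = S⁻ᴴ Z S⁻¹`; the eigenvalues of `1 - M` lie in `[0, 1]`, so
`rank (R̂ - Z) ≥ tr (1 - M) = N - tr (R̂⁻¹ Z) ≥ N - 1`. As `tr (R̂ W) = z₁ > 0`, `W ≠ 0`.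
-/

open Matrix
open scoped ComplexOrder

/-- The eigenvalues of a Hermitian matrix listed in decreasing order:
`eigDesc hA 0 ≥ eigDesc hA 1 ≥ … ≥ eigDesc hA (N-1)`. -/
noncomputable def eigDesc {N : ℕ} {A : Matrix (Fin N) (Fin N) ℂ} (hA : A.IsHermitian)
    (i : Fin N) : ℝ :=
  hA.eigenvalues (Tuple.sort hA.eigenvalues i.rev)

/-- Primal feasibility: `W ⪰ 0`, `x ≤ 0`, `y₁ ≥ 0`, `y₂ ≤ 0`,
`Δ₀x + (N−η₁)y₁ + (N+η₂)y₂ = 1`, `W − xC̄ − (y₁+y₂)I ⪰ 0`, and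
`xλ_{N−1}(C̄) + y₁ + y₂ ≤ 0`. -/
noncomputable def PrimalFeas {N : ℕ} (hN : 2 ≤ N) (Cbar : Matrix (Fin N) (Fin N) ℂ)
    (hC : Cbar.IsHermitian) (Δ₀ η₁ η₂ : ℝ)
    (W : Matrix (Fin N) (Fin N) ℂ) (x y₁ y₂ : ℝ) : Prop :=
  W.PosSemidef ∧ x ≤ 0 ∧ 0 ≤ y₁ ∧ y₂ ≤ 0 ∧
  Δ₀ * x + ((N : ℝ) - η₁) * y₁ + ((N : ℝ) + η₂) * y₂ = 1 ∧
  (W - (x : ℂ) • Cbar - ((y₁ + y₂ : ℝ) : ℂ) • 1).PosSemidef ∧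
  x * eigDesc hC ⟨N - 2, by omega⟩ + y₁ + y₂ ≤ 0

/-- Dual feasibility: `Z ⪰ 0`, `z₂ ≥ 0`, `R̂ − Z ⪰ 0`,
`tr(C̄Z) − Δ₀z₁ + λ_{N−1}(C̄)z₂ ≤ 0`, and `z₁(N−η₁) ≤ tr Z + z₂ ≤ z₁(N+η₂)`. -/
noncomputable def DualFeas {N : ℕ} (hN : 2 ≤ N) (Cbar : Matrix (Fin N) (Fin N) ℂ)
    (hC : Cbar.IsHermitian) (Rhat : Matrix (Fin N) (Fin N) ℂ) (Δ₀ η₁ η₂ : ℝ)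
    (Z : Matrix (Fin N) (Fin N) ℂ) (z₁ z₂ : ℝ) : Prop :=
  Z.PosSemidef ∧ 0 ≤ z₂ ∧ (Rhat - Z).PosSemidef ∧
  (Matrix.trace (Cbar * Z)).re - Δ₀ * z₁ + eigDesc hC ⟨N - 2, by omega⟩ * z₂ ≤ 0 ∧
  z₁ * ((N : ℝ) - η₁) ≤ (Matrix.trace Z).re + z₂ ∧
  (Matrix.trace Z).re + z₂ ≤ z₁ * ((N : ℝ) + η₂)

namespace Matrix

open scoped MatrixOrder

variable {𝕜 m n : Type*} [RCLike 𝕜] [Fintype n]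

lemma rank_pos_of_ne_zero {K : Type*} [Field K] [DecidableEq n] {A : Matrix m n K} (h : A ≠ 0) :
    0 < A.rank := by
  rw [Nat.pos_iff_ne_zero, rank, Ne, Submodule.finrank_eq_zero, LinearMap.range_eq_bot,
    ← toLin'_apply', LinearEquiv.map_eq_zero_iff]
  exact h

lemma trace_conjTranspose_mul_self_mul_conjTranspose_mul_self (X Y : Matrix n n 𝕜) :
    (Xᴴ * X * (Yᴴ * Y)).trace = (X * Yᴴ * (X * Yᴴ)ᴴ).trace := by
  rw [conjTranspose_mul, conjTranspose_conjTranspose, mul_assoc, trace_mul_comm]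
  simp only [mul_assoc]

lemma PosSemidef.trace_mul_nonneg {A B : Matrix n n 𝕜} (hA : A.PosSemidef) (hB : B.PosSemidef) :
    0 ≤ (A * B).trace := by
  classical
  obtain ⟨X, rfl⟩ := CStarAlgebra.nonneg_iff_eq_star_mul_self.mp hA.nonneg
  obtain ⟨Y, rfl⟩ := CStarAlgebra.nonneg_iff_eq_star_mul_self.mp hB.nonneg
  rw [star_eq_conjTranspose, star_eq_conjTranspose,
    trace_conjTranspose_mul_self_mul_conjTranspose_mul_self]
  exact (posSemidef_self_mul_conjTranspose _).trace_nonneg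

lemma PosSemidef.mul_eq_zero_of_trace_mul_eq_zero {A B : Matrix n n 𝕜} (hA : A.PosSemidef)
    (hB : B.PosSemidef) (h : (A * B).trace = 0) : A * B = 0 := by
  classical
  obtain ⟨X, rfl⟩ := CStarAlgebra.nonneg_iff_eq_star_mul_self.mp hA.nonneg
  obtain ⟨Y, rfl⟩ := CStarAlgebra.nonneg_iff_eq_star_mul_self.mp hB.nonneg
  rw [star_eq_conjTranspose, star_eq_conjTranspose,
    trace_conjTranspose_mul_self_mul_conjTranspose_mul_self,
    trace_mul_conjTranspose_self_eq_zero_iff] at h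
  rw [star_eq_conjTranspose, star_eq_conjTranspose, mul_assoc, ← mul_assoc X, h, zero_mul,
    mul_zero]

lemma IsHermitian.eigenvalues_le_one [DecidableEq n] {B : Matrix n n 𝕜} (hB : B.IsHermitian)
    (h : (1 - B).PosSemidef) (i : n) : hB.eigenvalues i ≤ 1 := by
  have hB1 : B ≤ algebraMap ℝ (Matrix n n 𝕜) 1 := by rwa [map_one, le_iff]
  exact (le_algebraMap_iff_spectrum_le hB.isSelfAdjoint).mp hB1 _
    (hB.eigenvalues_mem_spectrum_real i)

lemma IsHermitian.re_trace_le_rank [DecidableEq n] {B : Matrix n n 𝕜} (hB : B.IsHermitian)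
    (h : (1 - B).PosSemidef) : RCLike.re B.trace ≤ B.rank := by
  rw [hB.trace_eq_sum_eigenvalues, hB.rank_eq_card_non_zero_eigs, Fintype.card_subtype,
    ← RCLike.ofReal_sum, RCLike.ofReal_re, ← Finset.sum_filter_of_ne fun i _ hne => hne]
  simpa using Finset.sum_le_card_nsmul _ _ 1 fun i _ => hB.eigenvalues_le_one h i

lemma PosDef.card_sub_re_trace_inv_mul_le_rank_sub [DecidableEq n] {R Z : Matrix n n 𝕜}
    (hR : R.PosDef) (hZ : Z.PosSemidef) (hRZ : (R - Z).PosSemidef) :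
    Fintype.card n - RCLike.re (R⁻¹ * Z).trace ≤ (R - Z).rank := by
  obtain ⟨S, rfl⟩ := CStarAlgebra.nonneg_iff_eq_star_mul_self.mp hR.posSemidef.nonneg
  rw [star_eq_conjTranspose] at *
  have hS : IsUnit S.det := isUnit_of_mul_isUnit_right (x := Sᴴ.det) <| by
    rw [← det_mul, ← isUnit_iff_isUnit_det]; exact hR.isUnit
  set T := S⁻¹
  have hTS : T * S = 1 := nonsing_inv_mul S hS
  set M := Tᴴ * Z * T
  have hconj : Sᴴ * S - Z = Sᴴ * (1 - M) * S := by
    have hST : Sᴴ * Tᴴ = 1 := by rw [← conjTranspose_mul, hTS, conjTranspose_one]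
    simp only [M, mul_sub, sub_mul, mul_one]
    rw [← mul_assoc, ← mul_assoc, hST, one_mul, mul_assoc, hTS, mul_one]
  have hM : (1 - M).PosSemidef := by
    rw [← ((isUnit_iff_isUnit_det S).mpr hS).posSemidef_star_left_conjugate_iff,
      star_eq_conjTranspose, ← hconj]
    exact hRZ
  have hrank : (Sᴴ * (1 - M) * S).rank = (1 - M).rank := by
    rw [rank_mul_eq_left_of_isUnit_det S _ hS, rank_mul_eq_right_of_isUnit_det]
    rwa [det_conjTranspose, isUnit_star]
  have htrace : M.trace = ((Sᴴ * S)⁻¹ * Z).trace := by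
    rw [mul_inv_rev, ← conjTranspose_nonsing_inv, trace_mul_cycle, mul_assoc]
  have := hM.isHermitian.re_trace_le_rank <| by
    rw [sub_sub_cancel]; exact hZ.conjTranspose_mul_mul_same T
  rw [hconj, hrank, ← htrace]
  simpa [trace_sub] using this

lemma rank_le_one_of_sub_mul_eq_zero [DecidableEq n] {R Z W : Matrix n n 𝕜} (hR : R.PosDef)
    (hZ : Z.PosSemidef) (hRZ : (R - Z).PosSemidef) (htr : RCLike.re (R⁻¹ * Z).trace ≤ 1)
    (hW : (R - Z) * W = 0) : W.rank ≤ 1 := by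
  have hsum : ((R - Z).rank + W.rank : ℝ) ≤ Fintype.card n := by
    exact_mod_cast rank_add_rank_le_card_of_mul_eq_zero hW
  have := hR.card_sub_re_trace_inv_mul_le_rank_sub hZ hRZ
  exact_mod_cast (show (W.rank : ℝ) ≤ 1 by linarith)

end Matrix

lemma re_trace_sub_mul_add_le_re_trace_mul {N : ℕ} {hN : 2 ≤ N}
    {Cbar : Matrix (Fin N) (Fin N) ℂ} {hC : Cbar.IsHermitian} {Rhat W Z : Matrix (Fin N) (Fin N) ℂ}
    {Δ₀ η₁ η₂ x y₁ y₂ z₁ z₂ : ℝ} (hP : PrimalFeas hN Cbar hC Δ₀ η₁ η₂ W x y₁ y₂)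
    (hD : DualFeas hN Cbar hC Rhat Δ₀ η₁ η₂ Z z₁ z₂) :
    (trace ((Rhat - Z) * W)).re + z₁ ≤ (trace (Rhat * W)).re := by
  obtain ⟨-, hx, hy₁, hy₂, hsum, hE, hlam⟩ := hP
  obtain ⟨hZ, hz₂, -, hCZ, htr₁, htr₂⟩ := hD
  set lam := eigDesc hC ⟨N - 2, by omega⟩
  set E := W - (x : ℂ) • Cbar - ((y₁ + y₂ : ℝ) : ℂ) • 1
  have hsplit : trace (Rhat * W) = trace ((Rhat - Z) * W) + trace (Z * E)
      + x * trace (Cbar * Z) + (y₁ + y₂ : ℝ) * trace Z := by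
    simp only [E, sub_mul, mul_sub, Matrix.mul_smul, mul_one, trace_sub, trace_smul, smul_eq_mul,
      trace_mul_comm Z Cbar]
    ring
  have hZE : 0 ≤ (trace (Z * E)).re := (Complex.le_def.mp (hZ.trace_mul_nonneg hE)).1
  have hxC := mul_le_mul_of_nonpos_left
    (show (trace (Cbar * Z)).re ≤ Δ₀ * z₁ - lam * z₂ by linarith) hx
  have hy₁Z := mul_le_mul_of_nonneg_left
    (show z₁ * (N - η₁) - z₂ ≤ (trace Z).re by linarith) hy₁
  have hy₂Z := mul_le_mul_of_nonpos_left
    (show (trace Z).re ≤ z₁ * (N + η₂) - z₂ by linarith) hy₂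
  have hz₂lam := mul_nonneg hz₂ (show 0 ≤ -(x * lam + y₁ + y₂) by linarith)
  rw [hsplit]
  simp only [Complex.add_re, Complex.re_ofReal_mul]
  linear_combination hZE + hxC + hy₁Z + hy₂Z + hz₂lam - z₁ * hsum

theorem stmt_17_general {N : ℕ} (hN : 2 ≤ N) (η₁ η₂ : ℝ) (Δ₀ : ℝ)
    (Cbar : Matrix (Fin N) (Fin N) ℂ) (hC : Cbar.PosSemidef)
    (Rhat : Matrix (Fin N) (Fin N) ℂ) (hR : Rhat.PosDef)
    (W Z : Matrix (Fin N) (Fin N) ℂ) (x y₁ y₂ z₁ z₂ : ℝ)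
    (hP : PrimalFeas hN Cbar hC.isHermitian Δ₀ η₁ η₂ W x y₁ y₂)
    (hD : DualFeas hN Cbar hC.isHermitian Rhat Δ₀ η₁ η₂ Z z₁ z₂)
    (hgap : (Matrix.trace (Rhat * W)).re = z₁) (hpos : 0 < z₁)
    (htr : (Matrix.trace (Rhat⁻¹ * Z)).re ≤ 1) :
    W.rank = 1 := by
  have hW := hP.1
  have hZ := hD.1
  have hRZ := hD.2.2.1
  have hslack : (Rhat - Z) * W = 0 := by
    obtain ⟨hre, him⟩ := Complex.le_def.mp (hRZ.trace_mul_nonneg hW)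
    refine hRZ.mul_eq_zero_of_trace_mul_eq_zero hW (Complex.ext ?_ him.symm)
    linarith [re_trace_sub_mul_add_le_re_trace_mul hP hD, Complex.zero_re]
  have hW0 : W ≠ 0 := by
    rintro rfl
    simp only [mul_zero, trace_zero, Complex.zero_re] at hgap
    linarith
  have hle := rank_le_one_of_sub_mul_eq_zero hR hZ hRZ htr hslack
  have hge := rank_pos_of_ne_zero hW0
  omega

/-- Theorem 3: let `(W, x, y₁, y₂)` be primal optimal and `(Z, z₁, z₂)` dual optimal with
equal positive optimal values `tr(R̂W) = z₁ > 0`. If `tr(R̂⁻¹Z) ≤ 1`, then `rank W = 1`. -/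
theorem stmt_17 {N : ℕ} (hN : 2 ≤ N) (η₁ η₂ : ℝ) (hη₁0 : 0 ≤ η₁) (hη₁N : η₁ < N)
    (hη₂ : 0 ≤ η₂) (Δ₀ : ℝ) (hΔ₀ : 0 < Δ₀)
    (Cbar : Matrix (Fin N) (Fin N) ℂ) (hC : Cbar.PosSemidef)
    (Rhat : Matrix (Fin N) (Fin N) ℂ) (hR : Rhat.PosDef)
    (W Z : Matrix (Fin N) (Fin N) ℂ) (x y₁ y₂ z₁ z₂ : ℝ)
    (hP : PrimalFeas hN Cbar hC.isHermitian Δ₀ η₁ η₂ W x y₁ y₂)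
    (hPopt : ∀ (W' : Matrix (Fin N) (Fin N) ℂ) (x' y₁' y₂' : ℝ),
      PrimalFeas hN Cbar hC.isHermitian Δ₀ η₁ η₂ W' x' y₁' y₂' →
      (Matrix.trace (Rhat * W)).re ≤ (Matrix.trace (Rhat * W')).re)
    (hD : DualFeas hN Cbar hC.isHermitian Rhat Δ₀ η₁ η₂ Z z₁ z₂)
    (hDopt : ∀ (Z' : Matrix (Fin N) (Fin N) ℂ) (z₁' z₂' : ℝ),
      DualFeas hN Cbar hC.isHermitian Rhat Δ₀ η₁ η₂ Z' z₁' z₂' → z₁' ≤ z₁)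
    (hgap : (Matrix.trace (Rhat * W)).re = z₁) (hpos : 0 < z₁)
    (htr : (Matrix.trace (Rhat⁻¹ * Z)).re ≤ 1) :
    W.rank = 1 :=
  stmt_17_general hN η₁ η₂ Δ₀ Cbar hC Rhat hR W Z x y₁ y₂ z₁ z₂ hP hD hgap hpos htr
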